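/- With H = H_A ⊗ H_Ā and projection P_code: the commutant M_A' (within L(H_code)) is the smallest von Neumann algebra on H_code containing all operators of the form P_code (1 ⊗ O_Ā) P_code, where O_Ā ranges over all operators on H_Ā (not necessarily commuting with P_code). -/

import Mathlib

open Matrix Kronecker

variable {ιA ιB : Type*} [Fintype ιA] [Fintype ιB] [DecidableEq ιA] [DecidableEq ιB]

/-- The algebra `M_A` of logical operators reconstructible on `A`. -/
def MA (P : Matrix (ιA × ιB) (ιA × ιB) ℂ) : Set (Matrix (ιA × ιB) (ιA × ιB) ℂ) :=
  {B | ∃ OA : Matrix ιA ιA ℂ,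
    Commute (OA ⊗ₖ (1 : Matrix ιB ιB ℂ)) P ∧ B = P * (OA ⊗ₖ (1 : Matrix ιB ιB ℂ)) * P}

/-- The commutant of `M` within `L(H_code) = {B : B = P B P}`. -/
def cornerCommutant {n : Type*} [Fintype n]
    (P : Matrix n n ℂ) (M : Set (Matrix n n ℂ)) : Set (Matrix n n ℂ) :=
  {C | C = P * C * P ∧ ∀ B ∈ M, B * C = C * B}

/-- `S` is a von Neumann algebra on the code subspace `H_code = P H`. -/
def IsCodeVNA {n : Type*} [Fintype n]
    (P : Matrix n n ℂ) (S : Set (Matrix n n ℂ)) : Prop :=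
  (∀ B ∈ S, B = P * B * P) ∧ P ∈ S ∧
  (∀ a ∈ S, ∀ b ∈ S, a + b ∈ S) ∧ (∀ a ∈ S, ∀ b ∈ S, a * b ∈ S) ∧
  (∀ (c : ℂ), ∀ a ∈ S, c • a ∈ S) ∧ (∀ a ∈ S, star a ∈ S)

/-!
Let `S` be the ⋆-algebra generated by `P_code` and the operators `1 ⊗ O_Ā`. An operator
commuting with `S` commutes with every `1 ⊗ O_Ā`, so it is some `O_A ⊗ 1`, and it commutes with
`P_code`; its compression is then an element of `M_A`. Hence every `C` in the commutant of `M_A`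
on `H_code` commutes with the commutant of `S`, and the finite-dimensional double commutant
theorem puts `C` in `S`. Compressing a word in the generators of `S` by `P_code` gives a product
of operators `P_code (1 ⊗ O_Ā) P_code`, so `C = P_code C P_code` lies in every von Neumann
algebra on `H_code` that contains them.
-/

section Corner

variable {A : Type*} [Semigroup A] {P x y : A}

theorem IsIdempotentElem.mul_left_eq_of_eq_corner (hP : IsIdempotentElem P) (hx : x = P * x * P) :
    P * x = x := by
  rw [hx, ← mul_assoc, ← mul_assoc, hP.eq]

theorem IsIdempotentElem.mul_right_eq_of_eq_corner (hP : IsIdempotentElem P) (hx : x = P * x * P) :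
    x * P = x := by
  rw [hx, mul_assoc, hP.eq]

theorem IsIdempotentElem.corner_corner (hP : IsIdempotentElem P) (x : A) :
    P * (P * x * P) * P = P * x * P := by
  rw [← mul_assoc, ← mul_assoc, hP.eq, mul_assoc, hP.eq]

theorem IsIdempotentElem.corner_eq_mul_of_commute (hP : IsIdempotentElem P) (hxP : Commute x P) :
    P * x * P = P * x := by
  rw [mul_assoc, hxP.eq, ← mul_assoc, hP.eq]

theorem IsIdempotentElem.commute_corner_corner (hP : IsIdempotentElem P) (hxP : Commute x P)
    (hxy : Commute x y) : Commute (P * x * P) (P * y * P) := by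
  have hPP : ∀ z, P * (P * z) = P * z := fun z => by rw [← mul_assoc, hP.eq]
  have hxPz : ∀ z, x * (P * z) = P * (x * z) := fun z => by rw [← mul_assoc, hxP.eq, mul_assoc]
  calc P * x * P * (P * y * P) = P * (x * y) * P := by
        simp only [mul_assoc, hPP, hxPz, hxP.eq]
    _ = P * (y * x) * P := by rw [hxy.eq]
    _ = P * y * P * (P * x * P) := by simp only [mul_assoc, hPP, hxP.eq]

theorem IsIdempotentElem.commute_of_commute_corner (hP : IsIdempotentElem P)
    (hx : x = P * x * P) (hyP : Commute y P) (h : Commute (P * y * P) x) : Commute y x := by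
  have hPx : P * x = x := hP.mul_left_eq_of_eq_corner hx
  have hxP : x * P = x := hP.mul_right_eq_of_eq_corner hx
  calc y * x = P * y * P * x := by rw [mul_assoc _ P x, hPx, ← hyP.eq, mul_assoc, hPx]
    _ = x * (P * y * P) := h.eq
    _ = x * y := by rw [hP.corner_eq_mul_of_commute hyP, ← mul_assoc, hxP]

end Corner

namespace Matrix

section Kronecker
variable {m n R : Type*} [DecidableEq m]

theorem one_kronecker_eq_comp_diagonal [Semiring R] (M : Matrix n n R) :
    (1 : Matrix m m R) ⊗ₖ M = comp m m n n R (diagonal fun _ => M) := by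
  ext ⟨i, k⟩ ⟨j, l⟩
  by_cases h : i = j <;> simp [h]

variable [Fintype m]

theorem commute_diagonal_const_iff [NonUnitalNonAssocSemiring R] {M : R} {X : Matrix m m R} :
    Commute (diagonal fun _ => M) X ↔ ∀ i j, Commute M (X i j) := by
  simp only [Commute, SemiconjBy, ← Matrix.ext_iff, diagonal_mul, mul_diagonal]

variable [Fintype n]

theorem commute_one_kronecker_iff [Semiring R] {M : Matrix n n R}
    {Y : Matrix (m × n) (m × n) R} :
    Commute ((1 : Matrix m m R) ⊗ₖ M) Y ↔
      ∀ i j, Commute M ((comp m m n n R).symm Y i j) := by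
  have hcomp := commute_map_iff (compRingEquiv m n R).injective
    (x := diagonal fun _ => M) (y := (comp m m n n R).symm Y)
  rw [compRingEquiv_apply, compRingEquiv_apply, Equiv.apply_symm_apply] at hcomp
  rw [one_kronecker_eq_comp_diagonal, hcomp]
  exact commute_diagonal_const_iff

variable [DecidableEq n]

theorem exists_eq_kronecker_one_of_forall_commute [CommSemiring R]
    {Y : Matrix (m × n) (m × n) R}
    (hY : ∀ O : Matrix n n R, Commute ((1 : Matrix m m R) ⊗ₖ O) Y) :
    ∃ X : Matrix m m R, Y = X ⊗ₖ (1 : Matrix n n R) := by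
  have hscalar : ∀ i j, (comp m m n n R).symm Y i j ∈ Set.range (scalar n) := fun i j =>
    mem_range_scalar_iff_commute_single'.mpr fun k l => commute_one_kronecker_iff.mp (hY _) i j
  choose X hX using hscalar
  refine ⟨of X, ?_⟩
  ext ⟨i, k⟩ ⟨j, l⟩
  have hentry := congrFun (congrFun (hX i j) k) l
  simp only [scalar_apply, diagonal_apply, comp_symm_apply] at hentry
  simp [← hentry, one_apply]

theorem commute_kronecker_one_one_kronecker [CommSemiring R] (X : Matrix m m R) (O : Matrix n n R) :
    Commute (X ⊗ₖ (1 : Matrix n n R)) ((1 : Matrix m m R) ⊗ₖ O) := by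
  rw [Commute, SemiconjBy, ← mul_kronecker_mul, ← mul_kronecker_mul, mul_one, one_mul, one_mul,
    mul_one]

variable (m n R) in
def oneKroneckerStarAlgHom [CommSemiring R] [StarRing R] :
    Matrix n n R →⋆ₐ[R] Matrix (m × n) (m × n) R where
  toFun M := (1 : Matrix m m R) ⊗ₖ M
  map_one' := one_kronecker_one
  map_mul' A B := by rw [← mul_kronecker_mul, one_mul]
  map_zero' := kronecker_zero _
  map_add' := kronecker_add _
  commutes' c := by
    simp only [Algebra.algebraMap_eq_smul_one, kronecker_smul, one_kronecker_one]
  map_star' M := by simp [star_eq_conjTranspose, conjTranspose_kronecker]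

@[simp]
theorem oneKroneckerStarAlgHom_apply [CommSemiring R] [StarRing R] (M : Matrix n n R) :
    oneKroneckerStarAlgHom m n R M = (1 : Matrix m m R) ⊗ₖ M :=
  rfl

end Kronecker

end Matrix

section DoubleCommutant
open Module.End ContinuousLinearMap

theorem Submodule.commute_starProjection_of_invtSubmodule {𝕜 E : Type*} [RCLike 𝕜]
    [NormedAddCommGroup E] [InnerProductSpace 𝕜 E] [CompleteSpace E]
    {W : Submodule 𝕜 E} [W.HasOrthogonalProjection]
    {T : E →L[𝕜] E} (hT : W ∈ invtSubmodule T.toLinearMap)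
    (hT' : W ∈ invtSubmodule T.adjoint.toLinearMap) : Commute W.starProjection T :=
  (IsIdempotentElem.commute_iff W.isIdempotentElem_starProjection).mpr
    ⟨by rwa [W.range_starProjection],
      by rw [W.ker_starProjection]; exact orthogonal_mem_invtSubmodule hT'⟩

namespace Matrix

variable {n : Type*} [Fintype n] [DecidableEq n]

/-- The orthogonal projection onto the cyclic subspace `S v` commutes with `S`, hence with `C`. -/
theorem exists_mulVec_eq_of_mem_centralizer_centralizer (S : StarSubalgebra ℂ (Matrix n n ℂ))
    {C : Matrix n n ℂ} (hC : C ∈ Set.centralizer (Set.centralizer (S : Set (Matrix n n ℂ))))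
    (v : n → ℂ) : ∃ b ∈ S, C *ᵥ v = b *ᵥ v := by
  set T := toEuclideanCLM (n := n) (𝕜 := ℂ)
  let W : Submodule ℂ (EuclideanSpace ℂ n) := (Subalgebra.toSubmodule S.toSubalgebra).map
    ((apply ℂ _ (WithLp.toLp 2 v)).toLinearMap ∘ₗ T.toAlgEquiv.toLinearMap)
  have hW : ∀ x, x ∈ W ↔ ∃ b ∈ S, T b (WithLp.toLp 2 v) = x := fun x => by simp [W]
  have hinv : ∀ b ∈ S, W ∈ invtSubmodule (T b).toLinearMap := fun b hb => by
    refine (mem_invtSubmodule_iff_forall_mem_of_mem _).mpr fun x hx => ?_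
    obtain ⟨a, ha, rfl⟩ := (hW x).mp hx
    exact (hW _).mpr ⟨b * a, mul_mem hb ha, by simp⟩
  let E₀ := T.symm W.starProjection
  have hE₀ : E₀ ∈ Set.centralizer (S : Set (Matrix n n ℂ)) := fun b hb => by
    have hcomm := W.commute_starProjection_of_invtSubmodule (hinv b hb)
      (by rw [← star_eq_adjoint, ← map_star]; exact hinv _ (star_mem hb))
    calc b * E₀ = T.symm (T b * W.starProjection) := by simp [E₀]
      _ = T.symm (W.starProjection * T b) := by rw [hcomm.eq]
      _ = E₀ * b := by simp [E₀]
  have hCE₀ : W.starProjection * T C = T C * W.starProjection := by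
    simpa [E₀] using congrArg T (hC E₀ hE₀)
  have hv : W.starProjection (WithLp.toLp 2 v) = WithLp.toLp 2 v :=
    Submodule.starProjection_eq_self_iff.mpr ((hW _).mpr ⟨1, one_mem S, by simp⟩)
  have hCv : T C (WithLp.toLp 2 v) ∈ W := by
    rw [← hv, ← mul_apply_eq_comp, ← hCE₀]
    exact W.starProjection_apply_mem _
  obtain ⟨b, hb, hbv⟩ := (hW _).mp hCv
  refine ⟨b, hb, ?_⟩
  simpa [T, toEuclideanCLM_toLp] using hbv.symm

/-- Von Neumann's double commutant theorem; the cyclic-vector lemma above is applied to the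
amplification `1 ⊗ C` and the vector `vec 1`. -/
theorem mem_of_mem_centralizer_centralizer (S : StarSubalgebra ℂ (Matrix n n ℂ))
    {C : Matrix n n ℂ} (hC : C ∈ Set.centralizer (Set.centralizer (S : Set (Matrix n n ℂ)))) :
    C ∈ S := by
  let S₂ := S.map (oneKroneckerStarAlgHom n n ℂ)
  have hC₂ : (1 : Matrix n n ℂ) ⊗ₖ C ∈ Set.centralizer (Set.centralizer (S₂ : Set _)) := by
    intro Y hY
    have hblocks :
        ∀ i j, (comp n n n n ℂ).symm Y i j ∈ Set.centralizer (S : Set (Matrix n n ℂ)) :=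
      fun i j b hb => commute_one_kronecker_iff.mp (hY _ ⟨b, hb, rfl⟩) i j
    exact (commute_one_kronecker_iff.mpr fun i j => (hC _ (hblocks i j)).symm).eq.symm
  obtain ⟨_, ⟨b, hb, rfl⟩, hCb⟩ :=
    exists_mulVec_eq_of_mem_centralizer_centralizer S₂ hC₂ (vec 1)
  have hCb' : (1 : Matrix n n ℂ) ⊗ₖ C *ᵥ vec 1 = (1 : Matrix n n ℂ) ⊗ₖ b *ᵥ vec 1 := hCb
  rw [← vec_mul_eq_mulVec, ← vec_mul_eq_mulVec, mul_one, mul_one, vec_inj] at hCb'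
  exact hCb' ▸ hb

end Matrix

end DoubleCommutant

theorem isCodeVNA_cornerCommutant {n : Type*} [Fintype n] {P : Matrix n n ℂ}
    (hP : IsIdempotentElem P) (hPsa : IsSelfAdjoint P) {M : Set (Matrix n n ℂ)}
    (hM : ∀ B ∈ M, B = P * B * P) (hMstar : ∀ B ∈ M, star B ∈ M) :
    IsCodeVNA P (cornerCommutant P M) := by
  refine ⟨fun C hC => hC.1, ⟨?_, fun B hB => ?_⟩,
    fun a ha b hb => ⟨?_, Set.add_mem_centralizer ha.2 hb.2⟩,
    fun a ha b hb => ⟨?_, Set.mul_mem_centralizer ha.2 hb.2⟩,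
    fun c a ha => ⟨?_, Set.smul_mem_centralizer c ha.2⟩,
    fun a ha => ⟨?_, Set.star_mem_centralizer' hMstar ha.2⟩⟩
  · rw [hP.eq, hP.eq]
  · rw [hP.mul_right_eq_of_eq_corner (hM B hB), hP.mul_left_eq_of_eq_corner (hM B hB)]
  · rw [mul_add, add_mul, ← ha.1, ← hb.1]
  · calc a * b = P * a * (b * P) := by
          rw [hP.mul_left_eq_of_eq_corner ha.1, hP.mul_right_eq_of_eq_corner hb.1]
      _ = P * (a * b) * P := by simp only [mul_assoc]
  · rw [mul_smul_comm, smul_mul_assoc, ← ha.1]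
  · nth_rewrite 1 [ha.1]
    simp only [star_mul, hPsa.star_eq, mul_assoc]

omit [DecidableEq ιA] in
theorem eq_corner_of_mem_MA {P : Matrix (ιA × ιB) (ιA × ιB) ℂ} (hP : IsIdempotentElem P)
    {B : Matrix (ιA × ιB) (ιA × ιB) ℂ} (hB : B ∈ MA P) : B = P * B * P := by
  obtain ⟨OA, -, rfl⟩ := hB
  exact (hP.corner_corner _).symm

omit [DecidableEq ιA] in
theorem star_mem_MA {P : Matrix (ιA × ιB) (ιA × ιB) ℂ} (hPsa : IsSelfAdjoint P)
    {B : Matrix (ιA × ιB) (ιA × ιB) ℂ} (hB : B ∈ MA P) : star B ∈ MA P := by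
  obtain ⟨OA, hc, rfl⟩ := hB
  have hstar :
      star (OA ⊗ₖ (1 : Matrix ιB ιB ℂ)) = star OA ⊗ₖ (1 : Matrix ιB ιB ℂ) := by
    simp [star_eq_conjTranspose, conjTranspose_kronecker]
  refine ⟨star OA, ?_, ?_⟩
  · rw [← hstar, ← hPsa.star_eq]
    exact hc.star_star
  · simp only [star_mul, hPsa.star_eq, hstar, mul_assoc]

theorem corner_one_kronecker_mem_cornerCommutant {P : Matrix (ιA × ιB) (ιA × ιB) ℂ}
    (hP : IsIdempotentElem P) (O : Matrix ιB ιB ℂ) :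
    P * ((1 : Matrix ιA ιA ℂ) ⊗ₖ O) * P ∈ cornerCommutant P (MA P) := by
  refine ⟨(hP.corner_corner _).symm, ?_⟩
  rintro _ ⟨OA, hc, rfl⟩
  exact hP.commute_corner_corner hc (commute_kronecker_one_one_kronecker OA O)

abbrev codeComplementGenerators (P : Matrix (ιA × ιB) (ιA × ιB) ℂ) :
    Set (Matrix (ιA × ιB) (ιA × ιB) ℂ) :=
  insert P (Set.range (oneKroneckerStarAlgHom ιA ιB ℂ))

def codeComplementAlgebra (P : Matrix (ιA × ιB) (ιA × ιB) ℂ) :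
    StarSubalgebra ℂ (Matrix (ιA × ιB) (ιA × ιB) ℂ) :=
  StarAlgebra.adjoin ℂ (codeComplementGenerators P)

theorem mem_codeComplementAlgebra_of_mem_cornerCommutant {P : Matrix (ιA × ιB) (ιA × ιB) ℂ}
    (hP : IsIdempotentElem P) {C : Matrix (ιA × ιB) (ιA × ιB) ℂ}
    (hC : C ∈ cornerCommutant P (MA P)) : C ∈ codeComplementAlgebra P := by
  refine mem_of_mem_centralizer_centralizer _ fun y hy => ?_
  have hgen : ∀ g ∈ codeComplementGenerators P, Commute g y :=
    fun g hg => hy g (StarAlgebra.subset_adjoin ℂ _ hg)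
  obtain ⟨X, rfl⟩ := exists_eq_kronecker_one_of_forall_commute fun O =>
    hgen _ (Or.inr ⟨O, rfl⟩)
  have hXP : Commute (X ⊗ₖ (1 : Matrix ιB ιB ℂ)) P := (hgen P (Or.inl rfl)).symm
  exact (hP.commute_of_commute_corner hC.1 hXP (hC.2 _ ⟨X, hXP, rfl⟩)).eq

section Compression

variable {P : Matrix (ιA × ιB) (ιA × ιB) ℂ} {N : Set (Matrix (ιA × ιB) (ιA × ιB) ℂ)}

theorem star_codeComplementGenerators_subset (hPsa : IsSelfAdjoint P) :
    star (codeComplementGenerators P) ⊆ codeComplementGenerators P := by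
  rintro g (hg | ⟨O, hO⟩)
  · exact Or.inl (by rw [← star_star g, hg, hPsa.star_eq])
  · exact Or.inr ⟨star O, by rw [map_star, hO, star_star]⟩

theorem compression_mul_generator_mem (hP : IsIdempotentElem P)
    (hmul : ∀ a ∈ N, ∀ b ∈ N, a * b ∈ N)
    (hgen : ∀ O : Matrix ιB ιB ℂ, P * ((1 : Matrix ιA ιA ℂ) ⊗ₖ O) * P ∈ N)
    {g : Matrix (ιA × ιB) (ιA × ιB) ℂ} (hg : g ∈ codeComplementGenerators P)
    {x : Matrix (ιA × ιB) (ιA × ιB) ℂ}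
    (hx : ∀ O : Matrix ιB ιB ℂ, P * x * ((1 : Matrix ιA ιA ℂ) ⊗ₖ O) * P ∈ N)
    (O : Matrix ιB ιB ℂ) : P * (x * g) * ((1 : Matrix ιA ιA ℂ) ⊗ₖ O) * P ∈ N := by
  rcases hg with hgP | ⟨O', rfl⟩
  · have hsplit : P * (x * P) * ((1 : Matrix ιA ιA ℂ) ⊗ₖ O) * P =
        (P * x * ((1 : Matrix ιA ιA ℂ) ⊗ₖ 1) * P) *
          (P * ((1 : Matrix ιA ιA ℂ) ⊗ₖ O) * P) := by
      have hPP : ∀ z, P * (P * z) = P * z := fun z => by rw [← mul_assoc, hP.eq]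
      rw [one_kronecker_one, mul_one]
      simp only [mul_assoc, hPP]
    rw [hgP, hsplit]
    exact hmul _ (hx 1) _ (hgen O)
  · have hmerge : (1 : Matrix ιA ιA ℂ) ⊗ₖ (O' * O) =
        ((1 : Matrix ιA ιA ℂ) ⊗ₖ O') * ((1 : Matrix ιA ιA ℂ) ⊗ₖ O) := by
      rw [← mul_kronecker_mul, one_mul]
    simpa only [hmerge, oneKroneckerStarAlgHom_apply, mul_assoc] using hx (O' * O)

theorem compression_mul_mem_of_mem_codeComplementAlgebra (hP : IsIdempotentElem P)
    (hPsa : IsSelfAdjoint P) (hN : IsCodeVNA P N)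
    (hgen : ∀ O : Matrix ιB ιB ℂ, P * ((1 : Matrix ιA ιA ℂ) ⊗ₖ O) * P ∈ N)
    {s : Matrix (ιA × ιB) (ιA × ιB) ℂ} (hs : s ∈ codeComplementAlgebra P) :
    ∀ x : Matrix (ιA × ιB) (ιA × ιB) ℂ,
      (∀ O : Matrix ιB ιB ℂ, P * x * ((1 : Matrix ιA ιA ℂ) ⊗ₖ O) * P ∈ N) →
      ∀ O : Matrix ιB ιB ℂ, P * (x * s) * ((1 : Matrix ιA ιA ℂ) ⊗ₖ O) * P ∈ N := by
  obtain ⟨-, -, hadd, hmul, hsmul, -⟩ := hN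
  replace hs : s ∈ Algebra.adjoin ℂ (codeComplementGenerators P) := by
    rw [← Set.union_eq_left.mpr (star_codeComplementGenerators_subset hPsa)]
    exact hs
  induction hs using Algebra.adjoin_induction with
  | mem g hg => exact fun x hx => compression_mul_generator_mem hP hmul hgen hg hx
  | algebraMap c =>
    intro x hx O
    rw [Algebra.algebraMap_eq_smul_one, mul_smul_comm, mul_one, mul_smul_comm, smul_mul_assoc,
      smul_mul_assoc]
    exact hsmul c _ (hx O)
  | add t t' _ _ ht ht' =>
    intro x hx O
    rw [mul_add, mul_add, add_mul, add_mul]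
    exact hadd _ (ht x hx O) _ (ht' x hx O)
  | mul t t' _ _ ht ht' =>
    intro x hx O
    rw [← mul_assoc x t t']
    exact ht' _ (ht x hx) O

theorem compression_mem_of_mem_codeComplementAlgebra (hP : IsIdempotentElem P)
    (hPsa : IsSelfAdjoint P) (hN : IsCodeVNA P N)
    (hgen : ∀ O : Matrix ιB ιB ℂ, P * ((1 : Matrix ιA ιA ℂ) ⊗ₖ O) * P ∈ N)
    {s : Matrix (ιA × ιB) (ιA × ιB) ℂ} (hs : s ∈ codeComplementAlgebra P) :
    P * s * P ∈ N := by
  simpa using compression_mul_mem_of_mem_codeComplementAlgebra hP hPsa hN hgen hs 1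
    (fun O => by simpa using hgen O) 1

end Compression

/-- `M_A'` (within `L(H_code)`) is the smallest von Neumann algebra on
`H_code` containing all operators `P_code (1 ⊗ O_Ā) P_code`, with `O_Ā` ranging over all
operators on `H_Ā` (not necessarily commuting with `P_code`). -/
theorem commutant_is_smallest (P : Matrix (ιA × ιB) (ιA × ιB) ℂ)
    (hP : P * P = P) (hPsa : IsSelfAdjoint P) :
    IsCodeVNA P (cornerCommutant P (MA P)) ∧
    (∀ OB : Matrix ιB ιB ℂ,
      P * ((1 : Matrix ιA ιA ℂ) ⊗ₖ OB) * P ∈ cornerCommutant P (MA P)) ∧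
    (∀ N : Set (Matrix (ιA × ιB) (ιA × ιB) ℂ), IsCodeVNA P N →
      (∀ OB : Matrix ιB ιB ℂ, P * ((1 : Matrix ιA ιA ℂ) ⊗ₖ OB) * P ∈ N) →
      cornerCommutant P (MA P) ⊆ N) := by
  refine ⟨isCodeVNA_cornerCommutant hP hPsa (fun _ => eq_corner_of_mem_MA hP)
      (fun _ => star_mem_MA hPsa), corner_one_kronecker_mem_cornerCommutant hP,
    fun N hN hgen C hC => ?_⟩
  rw [hC.1]
  exact compression_mem_of_mem_codeComplementAlgebra hP hPsa hN hgen
    (mem_codeComplementAlgebra_of_mem_cornerCommutant hP hC)
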